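/- arXiv:1106.1114 — 5 statements merged into one kernel-verified Lean document; each statement's English description precedes it below -/
import Mathlib

section
/- Every separable state on a bipartite system has a positive semidefinite partial transpose, i.e., if ρ = Σ_k q_k |φ_k⟩⟨φ_k| ⊗ |ψ_k⟩⟨ψ_k| with q_k ≥ 0 summing to one, then ρ^{T_A} ≥ 0. -/
/-! A separable state is a convex combination of products `A ⊗ B` of positive semidefinite
matrices. Partial transposition is linear and sends `A ⊗ B` to `Aᵀ ⊗ B`, which is again a
Kronecker product of positive semidefinite matrices; hence the partial transpose is a nonnegative
combination of positive semidefinite matrices. -/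

open Matrix ComplexOrder

/-- Partial transposition on the first tensor factor, in a fixed product basis. -/
def ptA {α β : Type*} (ρ : Matrix (α × β) (α × β) ℂ) : Matrix (α × β) (α × β) ℂ :=
  Matrix.of fun p q => ρ (q.1, p.2) (p.1, q.2)

open scoped Kronecker

section PartialTranspose

variable {α β : Type*}

theorem ptA_smul (c : ℂ) (ρ : Matrix (α × β) (α × β) ℂ) : ptA (c • ρ) = c • ptA ρ :=
  rfl

theorem ptA_sum {ι : Type*} (s : Finset ι) (ρ : ι → Matrix (α × β) (α × β) ℂ) :
    ptA (∑ i ∈ s, ρ i) = ∑ i ∈ s, ptA (ρ i) := by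
  ext p r
  simp [ptA, Matrix.sum_apply]

theorem ptA_kronecker (A : Matrix α α ℂ) (B : Matrix β β ℂ) : ptA (A ⊗ₖ B) = Aᵀ ⊗ₖ B :=
  rfl

theorem Matrix.PosSemidef.ptA_kronecker [Finite α] [Finite β]
    {A : Matrix α α ℂ} {B : Matrix β β ℂ} (hA : A.PosSemidef) (hB : B.PosSemidef) : (ptA (A ⊗ₖ B)).PosSemidef := by
  rw [_root_.ptA_kronecker]
  exact hA.transpose.kronecker hB

end PartialTranspose

theorem stmt1_general {α β : Type*} [Fintype α] [Fintype β] {m : ℕ}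
    (q : Fin m → ℝ) (φ : Fin m → α → ℂ) (ψ : Fin m → β → ℂ)
    (hq : ∀ k, 0 ≤ q k)
    (ρ : Matrix (α × β) (α × β) ℂ)
    (hρ : ρ = ∑ k, (q k : ℂ) • Matrix.of (fun p r : α × β =>
      (φ k p.1 * star (φ k r.1)) * (ψ k p.2 * star (ψ k r.2)))) :
    (ptA ρ).PosSemidef := by
  have hproduct : ∀ k, Matrix.of (fun p r : α × β =>
      (φ k p.1 * star (φ k r.1)) * (ψ k p.2 * star (ψ k r.2))) =
      vecMulVec (φ k) (star (φ k)) ⊗ₖ vecMulVec (ψ k) (star (ψ k)) := fun _ => rfl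
  simp only [hρ, hproduct, ptA_sum, ptA_smul]
  refine posSemidef_sum _ fun k _ => PosSemidef.smul ?_ (Complex.zero_le_real.mpr (hq k))
  exact (posSemidef_vecMulVec_self_star _).ptA_kronecker (posSemidef_vecMulVec_self_star _)

theorem stmt1 {α β : Type*} [Fintype α] [Fintype β] {m : ℕ}
    (q : Fin m → ℝ) (φ : Fin m → α → ℂ) (ψ : Fin m → β → ℂ)
    (hq : ∀ k, 0 ≤ q k) (hq1 : ∑ k, q k = 1)
    (ρ : Matrix (α × β) (α × β) ℂ)
    (hρ : ρ = ∑ k, (q k : ℂ) • Matrix.of (fun p r : α × β =>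
      (φ k p.1 * star (φ k r.1)) * (ψ k p.2 * star (ψ k r.2)))) :
    (ptA ρ).PosSemidef :=
  stmt1_general q φ ψ hq ρ hρ
end

section
/- Let |ψ⟩ be a unit vector in H_A ⊗ H_B with Schmidt coefficients λ_i ≥ 0 (so Σ_i λ_i² = 1), and suppose |ψ⟩ has at least two nonzero Schmidt coefficients. Then for every normalized vector |φ⟩, ⟨φ| (|ψ⟩⟨ψ|)^{T_A} |φ⟩ ≥ -1/2. -/
open Matrix ComplexOrder

/-!
With `a i j = ⟨conj μᵢ ⊗ νⱼ, φ⟩`, partial transposition turns the quadratic form into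
`∑ i j, λᵢ λⱼ a i j * conj (a j i)`. The vectors `conj μᵢ ⊗ νⱼ` are orthonormal, so Bessel's
inequality gives `∑ |a i j|² ≤ 1`. Diagonal terms are nonnegative, and for `i ≠ j` we have
`|λᵢ λⱼ| ≤ (λᵢ² + λⱼ²) / 2 ≤ 1 / 2`, so the term `(i, j)` is at least `-(|a i j|² + |a j i|²) / 4`.
Summing over all pairs gives `-1/2`.
-/

open Finset

section TensorVec

variable {R α β : Type*}

def tensorVec [Mul R] (u : α → R) (v : β → R) : α × β → R := fun p => u p.1 * v p.2

theorem star_tensorVec_dotProduct [CommSemiring R] [StarRing R] [Fintype α] [Fintype β]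
    (u u' : α → R) (v v' : β → R) :
    star (tensorVec u v) ⬝ᵥ tensorVec u' v' = (star u ⬝ᵥ u') * (star v ⬝ᵥ v') := by
  simp only [dotProduct, tensorVec, Pi.star_apply, star_mul', Fintype.sum_prod_type, sum_mul_sum]
  exact sum_congr rfl fun a _ => sum_congr rfl fun b _ => by ring

end TensorVec

section Orthonormal

variable {𝕜 ι n : Type*} [RCLike 𝕜] [Fintype n]

theorem orthonormal_toLp_iff [DecidableEq ι] {v : ι → n → 𝕜} :
    Orthonormal 𝕜 (fun i => WithLp.toLp 2 (v i)) ↔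
      ∀ i j, star (v i) ⬝ᵥ v j = if i = j then 1 else 0 := by
  simp only [orthonormal_iff_ite, EuclideanSpace.inner_toLp_toLp, dotProduct_comm (v _)]

theorem orthonormal_toLp_star [DecidableEq ι] {v : ι → n → 𝕜}
    (hv : Orthonormal 𝕜 (fun i => WithLp.toLp 2 (v i))) :
    Orthonormal 𝕜 (fun i => WithLp.toLp 2 (star (v i))) := by
  rw [orthonormal_toLp_iff] at hv ⊢
  intro i j
  rw [star_dotProduct_star, dotProduct_comm, hv]
  split_ifs <;> simp

theorem Orthonormal.sum_norm_star_dotProduct_sq_le [Fintype ι] {v : ι → n → 𝕜}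
    (hv : Orthonormal 𝕜 (fun i => WithLp.toLp 2 (v i))) (x : n → 𝕜) :
    ∑ i, ‖star (v i) ⬝ᵥ x‖ ^ 2 ≤ RCLike.re (star x ⬝ᵥ x) := by
  simpa only [@norm_sq_eq_re_inner 𝕜, EuclideanSpace.inner_toLp_toLp, dotProduct_comm x] using
    hv.sum_inner_products_le (s := univ) (WithLp.toLp 2 x)

end Orthonormal

theorem orthonormal_toLp_tensorVec {𝕜 ι κ α β : Type*} [RCLike 𝕜] [Fintype α] [Fintype β]
    {u : ι → α → 𝕜} {v : κ → β → 𝕜} (hu : Orthonormal 𝕜 (fun i => WithLp.toLp 2 (u i)))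
    (hv : Orthonormal 𝕜 (fun k => WithLp.toLp 2 (v k))) :
    Orthonormal 𝕜 (fun ik : ι × κ => WithLp.toLp 2 (tensorVec (u ik.1) (v ik.2))) := by
  classical
  rw [orthonormal_toLp_iff] at hu hv ⊢
  rintro ⟨i, k⟩ ⟨j, l⟩
  rw [star_tensorVec_dotProduct, hu, hv]
  by_cases hij : i = j <;> by_cases hkl : k = l <;> simp [hij, hkl]

theorem star_dotProduct_ptA_mulVec {ι α β : Type*} [Fintype ι] [Fintype α] [Fintype β]
    (lam : ι → ℝ) (μ : ι → α → ℂ) (ν : ι → β → ℂ) (φ : α × β → ℂ) :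
    let ψ : α × β → ℂ := fun p => ∑ i, (lam i : ℂ) * μ i p.1 * ν i p.2
    let a : ι → ι → ℂ := fun i j => star (tensorVec (star (μ i)) (ν j)) ⬝ᵥ φ
    star φ ⬝ᵥ ptA (Matrix.of fun p q => ψ p * star (ψ q)) *ᵥ φ =
      ∑ i, ∑ j, (lam i * lam j : ℂ) * (a i j * star (a j i)) := by
  intro ψ a
  simp only [ψ, a, dotProduct, mulVec, ptA, Matrix.of_apply, tensorVec, Pi.star_apply, star_sum,
    star_mul', Complex.star_def, Complex.conj_ofReal, Complex.conj_conj, sum_mul, mul_sum]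
  simp only [sum_comm (γ := α × β) (α := ι)]
  rw [sum_comm]
  refine sum_congr rfl fun i _ => sum_congr rfl fun j _ => sum_congr rfl fun p _ =>
    sum_congr rfl fun q _ => by ring

theorem neg_quarter_le_mul_re_mul_star {l l' : ℝ} (h : l ^ 2 + l' ^ 2 ≤ 1) (z w : ℂ) :
    -(‖z‖ ^ 2 + ‖w‖ ^ 2) / 4 ≤ l * l' * (z * star w).re := by
  have hl : |l * l'| ≤ 1 / 2 := by
    rw [abs_le]; constructor <;> nlinarith [sq_nonneg (l + l'), sq_nonneg (l - l')]
  have hre : |(z * star w).re| ≤ ‖z‖ * ‖w‖ := by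
    simpa using Complex.abs_re_le_norm (z * star w)
  have hprod : |l * l' * (z * star w).re| ≤ ‖z‖ * ‖w‖ / 2 := by
    rw [abs_mul]
    nlinarith [abs_nonneg (l * l'), abs_nonneg (z * star w).re,
      mul_nonneg (norm_nonneg z) (norm_nonneg w)]
  nlinarith [neg_abs_le (l * l' * (z * star w).re), sq_nonneg (‖z‖ - ‖w‖)]

theorem neg_half_sum_norm_sq_le_re_sum {ι : Type*} [Fintype ι] {lam : ι → ℝ}
    (hlam : ∑ i, lam i ^ 2 ≤ 1) (a : ι → ι → ℂ) :
    -(1 / 2) * ∑ i, ∑ j, ‖a i j‖ ^ 2 ≤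
      (∑ i, ∑ j, (lam i * lam j : ℂ) * (a i j * star (a j i))).re := by
  classical
  have hterm : ∀ i j,
      -(‖a i j‖ ^ 2 + ‖a j i‖ ^ 2) / 4 ≤ lam i * lam j * (a i j * star (a j i)).re := by
    intro i j
    by_cases hij : i = j
    · subst hij
      have hdiag : (a i i * star (a i i)).re = ‖a i i‖ ^ 2 := by
        rw [Complex.star_def, Complex.mul_conj, Complex.normSq_eq_norm_sq, Complex.ofReal_re]
      rw [hdiag]
      nlinarith [mul_nonneg (mul_self_nonneg (lam i)) (sq_nonneg ‖a i i‖), sq_nonneg ‖a i i‖]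
    · refine neg_quarter_le_mul_re_mul_star (le_trans ?_ hlam) _ _
      rw [← sum_pair (f := fun k => lam k ^ 2) hij]
      exact sum_le_univ_sum_of_nonneg fun k => sq_nonneg (lam k)
  calc -(1 / 2) * ∑ i, ∑ j, ‖a i j‖ ^ 2
      = ∑ i, ∑ j, -(‖a i j‖ ^ 2 + ‖a j i‖ ^ 2) / 4 := by
        simp only [neg_div, add_div, sum_neg_distrib, sum_add_distrib, ← sum_div]
        rw [sum_comm (f := fun i j => ‖a j i‖ ^ 2)]
        ring
    _ ≤ ∑ i, ∑ j, lam i * lam j * (a i j * star (a j i)).re :=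
        sum_le_sum fun i _ => sum_le_sum fun j _ => hterm i j
    _ = (∑ i, ∑ j, (lam i * lam j : ℂ) * (a i j * star (a j i))).re := by
        simp only [Complex.re_sum, ← Complex.ofReal_mul, Complex.re_ofReal_mul]

theorem stmt5_general {α β : Type*} [Fintype α] [Fintype β] {m : ℕ}
    (lam : Fin m → ℝ) (μ : Fin m → α → ℂ) (ν : Fin m → β → ℂ)
    (hsum : ∑ i, (lam i) ^ 2 = 1)
    (hμ : ∀ i j, star (μ i) ⬝ᵥ μ j = if i = j then 1 else 0)
    (hν : ∀ i j, star (ν i) ⬝ᵥ ν j = if i = j then 1 else 0)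
    (ψ : α × β → ℂ) (hψ : ψ = fun p => ∑ i, (lam i : ℂ) * μ i p.1 * ν i p.2)
    (φ : α × β → ℂ) (hφ : star φ ⬝ᵥ φ = 1) :
    -(1/2) ≤ (star φ ⬝ᵥ (ptA (Matrix.of fun p q => ψ p * star (ψ q))) *ᵥ φ).re := by
  subst hψ
  have hon : Orthonormal ℂ fun ij : Fin m × Fin m =>
      WithLp.toLp 2 (tensorVec (star (μ ij.1)) (ν ij.2)) :=
    orthonormal_toLp_tensorVec (u := fun i => star (μ i))
      (orthonormal_toLp_star (orthonormal_toLp_iff.mpr hμ)) (orthonormal_toLp_iff.mpr hν)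
  have hbessel : ∑ i, ∑ j, ‖star (tensorVec (star (μ i)) (ν j)) ⬝ᵥ φ‖ ^ 2 ≤ 1 := by
    calc _ = ∑ ij : Fin m × Fin m, ‖star (tensorVec (star (μ ij.1)) (ν ij.2)) ⬝ᵥ φ‖ ^ 2 :=
          (Fintype.sum_prod_type _).symm
      _ ≤ RCLike.re (star φ ⬝ᵥ φ) := hon.sum_norm_star_dotProduct_sq_le φ
      _ = 1 := by rw [hφ, RCLike.one_re]
  rw [star_dotProduct_ptA_mulVec]
  linarith [neg_half_sum_norm_sq_le_re_sum hsum.le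
    (fun i j => star (tensorVec (star (μ i)) (ν j)) ⬝ᵥ φ)]

/-- For a unit vector `|ψ⟩` with Schmidt coefficients `λ_i ≥ 0`, `Σ λ_i² = 1`, having at
least two nonzero Schmidt coefficients, and any unit vector `|φ⟩`,
`⟨φ|(|ψ⟩⟨ψ|)^{T_A}|φ⟩ ≥ -1/2`. -/
theorem stmt5 {α β : Type*} [Fintype α] [Fintype β] {m : ℕ}
    (lam : Fin m → ℝ) (μ : Fin m → α → ℂ) (ν : Fin m → β → ℂ)
    (hlam : ∀ i, 0 ≤ lam i) (hsum : ∑ i, (lam i) ^ 2 = 1)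
    (htwo : ∃ i j, i ≠ j ∧ lam i ≠ 0 ∧ lam j ≠ 0)
    (hμ : ∀ i j, star (μ i) ⬝ᵥ μ j = if i = j then 1 else 0)
    (hν : ∀ i j, star (ν i) ⬝ᵥ ν j = if i = j then 1 else 0)
    (ψ : α × β → ℂ) (hψ : ψ = fun p => ∑ i, (lam i : ℂ) * μ i p.1 * ν i p.2)
    (φ : α × β → ℂ) (hφ : star φ ⬝ᵥ φ = 1) :
    -(1/2) ≤ (star φ ⬝ᵥ (ptA (Matrix.of fun p q => ψ p * star (ψ q))) *ᵥ φ).re :=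
  stmt5_general lam μ ν hsum hμ hν ψ hψ φ hφ
end

section
/- The negativity of a state ρ on H_A ⊗ H_B, defined as the sum of absolute values of the negative eigenvalues of ρ^{T_A}, equals -min over operators W of Tr(Wρ), where the minimum is over all W of the form W = P + Q^{T_A} with 0 ≤ P ≤ 𝟙 and 0 ≤ Q ≤ 𝟙. -/
/-
Since `Tr(Q^{T_A} ρ) = Tr(Q ρ^{T_A})`, the quantity `Tr(Wρ)` splits into `Tr(Pρ) ≥ 0`, minimised
by `P = 0`, and `Tr(Q ρ^{T_A})`. In an eigenbasis of `ρ^{T_A}` the latter is `∑ qᵢ λᵢ`, where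
the diagonal entries `qᵢ` of `Q` lie in `[0, 1]`; it is therefore at least the sum of the negative
eigenvalues, with equality for the spectral projection of `ρ^{T_A}` onto `(-∞, 0)`.
-/

open Matrix ComplexOrder

lemma trace_ptA_mul {α β : Type*} [Fintype α] [Fintype β] (Q ρ : Matrix (α × β) (α × β) ℂ) :
    (ptA Q * ρ).trace = (Q * ptA ρ).trace := by
  simp only [trace, diag, mul_apply, ptA, of_apply]
  rw [← Fintype.sum_prod_type', ← Fintype.sum_prod_type']
  exact Fintype.sum_equiv ⟨fun x => ((x.2.1, x.1.2), (x.1.1, x.2.2)),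
    fun x => ((x.2.1, x.1.2), (x.1.1, x.2.2)), fun _ => rfl, fun _ => rfl⟩ _ _ (fun _ => rfl)

lemma Finset.sum_filter_neg_le_sum_mul {ι : Type*} (s : Finset ι) {c l : ι → ℝ}
    (hc0 : ∀ i, 0 ≤ c i) (hc1 : ∀ i, c i ≤ 1) :
    ∑ i ∈ s.filter (fun i => l i < 0), l i ≤ ∑ i ∈ s, c i * l i := by
  rw [Finset.sum_filter]
  refine Finset.sum_le_sum fun i _ => ?_
  split_ifs with h
  · nlinarith [hc1 i]
  · exact mul_nonneg (hc0 i) (not_lt.mp h)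

namespace Matrix

variable {𝕜 n : Type*} [RCLike 𝕜] [DecidableEq n]

lemma PosSemidef.re_diag_mem_Icc {M : Matrix n n 𝕜} (hM : M.PosSemidef)
    (hM1 : (1 - M).PosSemidef) (i : n) : RCLike.re (M i i) ∈ Set.Icc 0 1 := by
  have h0 := (RCLike.nonneg_iff.mp (hM.diag_nonneg (i := i))).1
  have h1 := (RCLike.nonneg_iff.mp (hM1.diag_nonneg (i := i))).1
  simp only [sub_apply, one_apply_eq, map_sub, RCLike.one_re] at h1
  exact ⟨h0, by linarith⟩

variable [Fintype n]

open scoped MatrixOrder in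
lemma PosSemidef.trace_mul_nonneg {P S : Matrix n n 𝕜} (hP : P.PosSemidef) (hS : S.PosSemidef) :
    0 ≤ (P * S).trace := by
  obtain ⟨B, rfl⟩ := CStarAlgebra.nonneg_iff_eq_star_mul_self.mp hS.nonneg
  rw [← mul_assoc, trace_mul_cycle]
  exact (hP.mul_mul_conjTranspose_same B).trace_nonneg

lemma star_mul_one_sub_mul_unitary (M : Matrix n n 𝕜) (U : unitary (Matrix n n 𝕜)) :
    star (U : Matrix n n 𝕜) * (1 - M) * U = 1 - star (U : Matrix n n 𝕜) * M * U := by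
  rw [mul_sub, sub_mul, mul_one, Unitary.coe_star_mul_self]

namespace IsHermitian

variable {A : Matrix n n 𝕜} (hA : A.IsHermitian)

lemma trace_mul_eq_sum_eigenvalues (M : Matrix n n 𝕜) :
    (M * A).trace = ∑ i, (star (hA.eigenvectorUnitary : Matrix n n 𝕜) * M *
      (hA.eigenvectorUnitary : Matrix n n 𝕜)) i i * hA.eigenvalues i := by
  conv_lhs => rw [hA.spectral_theorem, Unitary.conjStarAlgAut_apply, ← mul_assoc, ← mul_assoc,
    trace_mul_comm, ← mul_assoc, ← mul_assoc]
  simp [trace, mul_diagonal]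

lemma star_eigenvectorUnitary_mul_cfc_mul (f : ℝ → ℝ) :
    star (hA.eigenvectorUnitary : Matrix n n 𝕜) * cfc f A *
      (hA.eigenvectorUnitary : Matrix n n 𝕜) =
      diagonal (RCLike.ofReal ∘ f ∘ hA.eigenvalues) := by
  rw [hA.cfc_eq, IsHermitian.cfc, Unitary.conjStarAlgAut_apply]
  simp only [← mul_assoc, Unitary.coe_star_mul_self, one_mul]
  simp only [mul_assoc, Unitary.coe_star_mul_self, mul_one]

lemma sum_filter_neg_eigenvalues_le_re_trace_mul {Q : Matrix n n 𝕜} (hQ : Q.PosSemidef)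
    (hQ1 : (1 - Q).PosSemidef) :
    ∑ i ∈ Finset.univ.filter (fun i => hA.eigenvalues i < 0), hA.eigenvalues i ≤
      RCLike.re (Q * A).trace := by
  set U : unitary (Matrix n n 𝕜) := hA.eigenvectorUnitary
  have hM : (star (U : Matrix n n 𝕜) * Q * U).PosSemidef := hQ.conjTranspose_mul_mul_same _
  have hM1 : (1 - star (U : Matrix n n 𝕜) * Q * U).PosSemidef := by
    rw [← star_mul_one_sub_mul_unitary]; exact hQ1.conjTranspose_mul_mul_same _
  rw [hA.trace_mul_eq_sum_eigenvalues, map_sum]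
  simp only [RCLike.re_mul_ofReal]
  exact Finset.sum_filter_neg_le_sum_mul _ (fun i => (hM.re_diag_mem_Icc hM1 i).1)
    (fun i => (hM.re_diag_mem_Icc hM1 i).2)

open scoped MatrixOrder in
lemma isLeast_re_trace_mul :
    IsLeast {x | ∃ Q : Matrix n n 𝕜, Q.PosSemidef ∧ (1 - Q).PosSemidef ∧
        x = RCLike.re (Q * A).trace}
      (∑ i ∈ Finset.univ.filter (fun i => hA.eigenvalues i < 0), hA.eigenvalues i) := by
  refine ⟨⟨cfc (fun x : ℝ => if x < 0 then 1 else 0) A, ?_, ?_, ?_⟩, ?_⟩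
  · exact nonneg_iff_posSemidef.mp (cfc_nonneg fun x _ => by split_ifs <;> norm_num)
  · exact le_iff.mp (cfc_le_one _ A fun x _ => by split_ifs <;> norm_num)
  · rw [hA.trace_mul_eq_sum_eigenvalues, hA.star_eigenvectorUnitary_mul_cfc_mul, map_sum,
      Finset.sum_filter]
    refine Finset.sum_congr rfl fun i _ => ?_
    split_ifs <;> simp [*]
  · rintro _ ⟨Q, hQ, hQ1, rfl⟩
    exact hA.sum_filter_neg_eigenvalues_le_re_trace_mul hQ hQ1

end IsHermitian

end Matrix

theorem stmt8_general {α β : Type*} [Fintype α] [Fintype β] [DecidableEq α] [DecidableEq β]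
    (ρ : Matrix (α × β) (α × β) ℂ) (hρ : ρ.PosSemidef)
    (hH : (ptA ρ).IsHermitian) :
    IsGreatest {x : ℝ | ∃ P Q : Matrix (α × β) (α × β) ℂ,
        P.PosSemidef ∧ (1 - P).PosSemidef ∧ Q.PosSemidef ∧ (1 - Q).PosSemidef ∧
        x = -((P + ptA Q) * ρ).trace.re}
      (∑ i ∈ Finset.univ.filter (fun i => hH.eigenvalues i < 0), |hH.eigenvalues i|) := by
  have hneg : ∑ i ∈ Finset.univ.filter (fun i => hH.eigenvalues i < 0), |hH.eigenvalues i| =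
      -∑ i ∈ Finset.univ.filter (fun i => hH.eigenvalues i < 0), hH.eigenvalues i := by
    rw [← Finset.sum_neg_distrib]
    exact Finset.sum_congr rfl fun i hi => abs_of_neg (Finset.mem_filter.mp hi).2
  obtain ⟨⟨Q, hQ, hQ1, hQmin⟩, hmin⟩ := hH.isLeast_re_trace_mul
  refine ⟨⟨0, Q, .zero, by simpa using .one, hQ, hQ1, ?_⟩, ?_⟩
  · rw [zero_add, trace_ptA_mul, hneg, hQmin, RCLike.re_to_complex]
  · rintro _ ⟨P, Q, hP, -, hQ, hQ1, rfl⟩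
    have hPρ := (Complex.nonneg_iff.mp (hP.trace_mul_nonneg hρ)).1
    have hQρ : _ ≤ (Q * ptA ρ).trace.re := hmin ⟨Q, hQ, hQ1, rfl⟩
    rw [add_mul, trace_add, Complex.add_re, trace_ptA_mul, hneg]
    linarith

/-- The negativity (sum of absolute values of negative eigenvalues of `ρ^{T_A}`) equals
`-min Tr(Wρ)` over all `W = P + Q^{T_A}` with `0 ≤ P ≤ 𝟙` and `0 ≤ Q ≤ 𝟙`; i.e. the
negativity is the greatest element of the set of values `-Tr(Wρ)`. -/
theorem stmt8 {α β : Type*} [Fintype α] [Fintype β] [DecidableEq α] [DecidableEq β]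
    (ρ : Matrix (α × β) (α × β) ℂ) (hρ : ρ.PosSemidef) (htr : ρ.trace = 1)
    (hH : (ptA ρ).IsHermitian) :
    IsGreatest {x : ℝ | ∃ P Q : Matrix (α × β) (α × β) ℂ,
        P.PosSemidef ∧ (1 - P).PosSemidef ∧ Q.PosSemidef ∧ (1 - Q).PosSemidef ∧
        x = -((P + ptA Q) * ρ).trace.re}
      (∑ i ∈ Finset.univ.filter (fun i => hH.eigenvalues i < 0), |hH.eigenvalues i|) :=
  stmt8_general ρ hρ hH
end

section
/- Let ρ_G = Σ_k s_k |k⟩⟨k| be diagonal in a graph state basis and let W be any Hermitian operator with a decomposition W = P + Q^{T_M} with P, Q ≥ 0 for a fixed subset M. Then the graph-diagonalized operators W̄, P̄, Q̄ (obtained by projecting onto the graph basis diagonal) satisfy Tr(W̄ ρ_G) = Tr(W ρ_G), W̄ = P̄ + Q̄^{T_M}, P̄ ≥ 0 and Q̄ ≥ 0. -/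
open Matrix ComplexOrder

/-- Pauli X. -/
def PX : Matrix (Fin 2) (Fin 2) ℂ := !![0, 1; 1, 0]

/-- Pauli Z. -/
def PZ : Matrix (Fin 2) (Fin 2) ℂ := !![1, 0; 0, -1]

/-- The `n`-qubit operator acting as the single-qubit operator `A j` on qubit `j`. -/
def localOp {n : ℕ} (A : Fin n → Matrix (Fin 2) (Fin 2) ℂ) :
    Matrix (Fin n → Fin 2) (Fin n → Fin 2) ℂ :=
  Matrix.of fun x y => ∏ j, A j (x j) (y j)

/-- The stabilizer generator `g_i = X_i ∏_{k ∈ N(i)} Z_k` of the graph state of `G`. -/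
def gen {n : ℕ} (G : SimpleGraph (Fin n)) [DecidableRel G.Adj] (i : Fin n) :
    Matrix (Fin n → Fin 2) (Fin n → Fin 2) ℂ :=
  localOp (fun j => if j = i then PX else if G.Adj i j then PZ else 1)

/-- Partial transposition over the qubits in `M`, in the computational basis. -/
def ptQ {n : ℕ} (M : Finset (Fin n))
    (ρ : Matrix (Fin n → Fin 2) (Fin n → Fin 2) ℂ) :
    Matrix (Fin n → Fin 2) (Fin n → Fin 2) ℂ :=
  Matrix.of fun x y =>
    ρ (fun i => if i ∈ M then y i else x i) (fun i => if i ∈ M then x i else y i)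

/-- The pinching (graph-diagonalization) `Ō = Σ_k |k⟩⟨k| O |k⟩⟨k|` in the graph basis `v`. -/
noncomputable def pinch {n : ℕ} (v : (Fin n → Fin 2) → (Fin n → Fin 2) → ℂ)
    (O : Matrix (Fin n → Fin 2) (Fin n → Fin 2) ℂ) :
    Matrix (Fin n → Fin 2) (Fin n → Fin 2) ℂ :=
  ∑ a, (star (v a) ⬝ᵥ O *ᵥ v a) • Matrix.of (fun x y => v a x * star (v a y))



/-! Write `E c d = |c⟩⟨d|` for the graph basis. Conjugation by the stabilizer generator `g_i`
multiplies `E c d` by `(-1)^(c i + d i)`, so the pinching keeps exactly the components that are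
invariant under every such conjugation. Each `g_i` is a tensor product of the real symmetric
matrices `X`, `Z`, `1`, hence the partial transpose commutes with conjugation by `g_i`; it therefore
preserves these sign patterns and commutes with the pinching. The pinching of a positive
operator is a nonnegative combination of the projectors `|a⟩⟨a|`, and `ρ_G` only sees the
diagonal entries `⟨a|W|a⟩`, which the pinching does not change. -/

section OrthonormalBasis

variable {m α : Type*} [Fintype m] {v : α → m → ℂ}

lemma mul_mul_apply_eq_sum (A B C : Matrix m m ℂ) (x y : m) :
    (A * B * C) x y = ∑ p : m × m, A x p.1 * B p.1 p.2 * C p.2 y := by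
  simp only [mul_apply, Finset.sum_mul, Fintype.sum_prod_type]
  exact Finset.sum_comm

lemma vecMulVec_mul_mul_vecMulVec (u w x y : m → ℂ) (X : Matrix m m ℂ) :
    vecMulVec u w * X * vecMulVec x y = (w ⬝ᵥ X *ᵥ x) • vecMulVec u y := by
  rw [Matrix.mul_assoc, mul_vecMulVec, vecMulVec_mul_vecMulVec, vecMulVec_smul]

lemma dotProduct_vecMulVec_mulVec [DecidableEq α]
    (horth : ∀ a b, star (v a) ⬝ᵥ v b = if a = b then 1 else 0) (a b c d : α) :
    star (v a) ⬝ᵥ vecMulVec (v c) (star (v d)) *ᵥ v b = if a = c ∧ d = b then 1 else 0 := by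
  rw [vecMulVec_mulVec, op_smul_eq_smul, dotProduct_smul, horth, horth]
  by_cases hac : a = c <;> by_cases hdb : d = b <;> simp [hac, hdb]

lemma eq_sum_smul_vecMulVec [DecidableEq m] [Fintype α]
    (hcompl : ∑ a, vecMulVec (v a) (star (v a)) = 1) (X : Matrix m m ℂ) :
    X = ∑ a, ∑ b, (star (v a) ⬝ᵥ X *ᵥ v b) • vecMulVec (v a) (star (v b)) := by
  calc X = (∑ a, vecMulVec (v a) (star (v a))) * X * ∑ b, vecMulVec (v b) (star (v b)) := by
        rw [hcompl, Matrix.one_mul, Matrix.mul_one]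
    _ = _ := by
        simp only [Finset.sum_mul, Finset.mul_sum, vecMulVec_mul_mul_vecMulVec]
        exact Finset.sum_comm

lemma ext_of_dotProduct_mulVec [DecidableEq m] [Fintype α]
    (hcompl : ∑ a, vecMulVec (v a) (star (v a)) = 1) {X Y : Matrix m m ℂ}
    (h : ∀ a b, star (v a) ⬝ᵥ X *ᵥ v b = star (v a) ⬝ᵥ Y *ᵥ v b) :
    X = Y := by
  rw [eq_sum_smul_vecMulVec hcompl X, eq_sum_smul_vecMulVec hcompl Y]
  simp only [h]

lemma star_vecMul_of_eigen {U : Matrix m m ℂ} (hU : U.IsHermitian) {μ : α → ℂ}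
    (hμ : ∀ a, star (μ a) = μ a) (heig : ∀ a, U *ᵥ v a = μ a • v a) (a : α) :
    star (v a) ᵥ* U = μ a • star (v a) := by
  rw [← hU.eq, ← star_mulVec, heig, star_smul, hμ]

lemma mul_vecMulVec_mul_of_eigen {U : Matrix m m ℂ} (hU : U.IsHermitian) {μ : α → ℂ}
    (hμ : ∀ a, star (μ a) = μ a) (heig : ∀ a, U *ᵥ v a = μ a • v a) (c d : α) :
    U * vecMulVec (v c) (star (v d)) * U = (μ c * μ d) • vecMulVec (v c) (star (v d)) := by
  rw [mul_vecMulVec, vecMulVec_mul, heig, star_vecMul_of_eigen hU hμ heig, smul_vecMulVec,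
    vecMulVec_smul, smul_smul]

lemma dotProduct_mul_mul_mulVec_of_eigen {U : Matrix m m ℂ} (hU : U.IsHermitian) {μ : α → ℂ}
    (hμ : ∀ a, star (μ a) = μ a) (heig : ∀ a, U *ᵥ v a = μ a • v a) (X : Matrix m m ℂ)
    (a b : α) :
    star (v a) ⬝ᵥ (U * X * U) *ᵥ v b = μ a * μ b * (star (v a) ⬝ᵥ X *ᵥ v b) := by
  rw [← mulVec_mulVec, ← mulVec_mulVec, heig, mulVec_smul, mulVec_smul, dotProduct_smul,
    dotProduct_mulVec, star_vecMul_of_eigen hU hμ heig, smul_dotProduct, smul_smul, smul_eq_mul,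
    mul_comm (μ b)]

end OrthonormalBasis

section Pinching

variable {n : ℕ} {v : (Fin n → Fin 2) → (Fin n → Fin 2) → ℂ}

lemma pinch_eq_sum (O : Matrix (Fin n → Fin 2) (Fin n → Fin 2) ℂ) :
    pinch v O = ∑ a, (star (v a) ⬝ᵥ O *ᵥ v a) • vecMulVec (v a) (star (v a)) := rfl

lemma pinch_eq_sum_mul_mul (O : Matrix (Fin n → Fin 2) (Fin n → Fin 2) ℂ) :
    pinch v O = ∑ a, vecMulVec (v a) (star (v a)) * O * vecMulVec (v a) (star (v a)) := by
  simp only [vecMulVec_mul_mul_vecMulVec, pinch_eq_sum]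

variable (v) in
noncomputable def pinchLinearMap :
    Matrix (Fin n → Fin 2) (Fin n → Fin 2) ℂ →ₗ[ℂ] Matrix (Fin n → Fin 2) (Fin n → Fin 2) ℂ where
  toFun := pinch v
  map_add' A B := by
    simp only [pinch_eq_sum_mul_mul, Matrix.mul_add, Matrix.add_mul, Finset.sum_add_distrib]
  map_smul' c A := by
    simp only [pinch_eq_sum_mul_mul, Matrix.mul_smul, Matrix.smul_mul, Finset.smul_sum,
      RingHom.id_apply]

lemma pinchLinearMap_apply (O : Matrix (Fin n → Fin 2) (Fin n → Fin 2) ℂ) :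
    pinchLinearMap v O = pinch v O := rfl

lemma pinch_add (A B : Matrix (Fin n → Fin 2) (Fin n → Fin 2) ℂ) :
    pinch v (A + B) = pinch v A + pinch v B :=
  map_add (pinchLinearMap v) A B

lemma dotProduct_pinch_mulVec (horth : ∀ a b, star (v a) ⬝ᵥ v b = if a = b then 1 else 0)
    (O : Matrix (Fin n → Fin 2) (Fin n → Fin 2) ℂ) (a b : Fin n → Fin 2) :
    star (v a) ⬝ᵥ pinch v O *ᵥ v b = if a = b then star (v a) ⬝ᵥ O *ᵥ v a else 0 := by
  rw [pinch_eq_sum, sum_mulVec, dotProduct_sum]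
  simp only [smul_mulVec, dotProduct_smul, dotProduct_vecMulVec_mulVec horth, smul_eq_mul]
  rw [Finset.sum_eq_single a (fun c _ hca => by simp [Ne.symm hca]) (by simp)]
  by_cases hab : a = b <;> simp [hab]

lemma pinch_vecMulVec (horth : ∀ a b, star (v a) ⬝ᵥ v b = if a = b then 1 else 0)
    (c d : Fin n → Fin 2) :
    pinch v (vecMulVec (v c) (star (v d)))
      = if c = d then vecMulVec (v c) (star (v c)) else 0 := by
  rw [pinch_eq_sum]
  simp only [dotProduct_vecMulVec_mulVec horth, ite_smul, one_smul, zero_smul]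
  rw [Finset.sum_eq_single c (fun a _ hac => by simp [hac]) (by simp)]
  by_cases hcd : c = d
  · simp [hcd]
  · simp [hcd, Ne.symm hcd]

lemma eq_iff_eq_of_neg_one_pow_mul_eq {s t p q : Fin 2}
    (h : (-1 : ℂ) ^ (s : ℕ) * (-1) ^ (t : ℕ) = (-1) ^ (p : ℕ) * (-1) ^ (q : ℕ)) :
    s = t ↔ p = q := by
  revert h
  fin_cases s <;> fin_cases t <;> fin_cases p <;> fin_cases q <;> norm_num

/- Conjugation by `U i` scales `|c⟩⟨d|` by `σ (c i) * σ (d i)` and the matrix element `⟨a|·|b⟩`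
by `σ (a i) * σ (b i)`, where `σ t = (-1) ^ t`; since `T` commutes with it, the two factors
agree whenever `⟨a|T (|c⟩⟨d|)|b⟩ ≠ 0`. -/
lemma eq_iff_eq_of_dotProduct_map_vecMulVec_mulVec_ne_zero
    {U : Fin n → Matrix (Fin n → Fin 2) (Fin n → Fin 2) ℂ} (hU : ∀ i, (U i).IsHermitian)
    (heig : ∀ a i, U i *ᵥ v a = ((-1 : ℂ) ^ (a i : ℕ)) • v a)
    {T : Matrix (Fin n → Fin 2) (Fin n → Fin 2) ℂ →ₗ[ℂ] Matrix (Fin n → Fin 2) (Fin n → Fin 2) ℂ}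
    (hT : ∀ i X, T (U i * X * U i) = U i * T X * U i) {a b c d : Fin n → Fin 2}
    (h : star (v a) ⬝ᵥ T (vecMulVec (v c) (star (v d))) *ᵥ v b ≠ 0) (i : Fin n) :
    a i = b i ↔ c i = d i := by
  have hμ : ∀ x : Fin n → Fin 2, star ((-1 : ℂ) ^ (x i : ℕ)) = (-1) ^ (x i : ℕ) := by simp
  have hconj := congrArg (fun X => star (v a) ⬝ᵥ X *ᵥ v b) (hT i (vecMulVec (v c) (star (v d))))
  simp only [mul_vecMulVec_mul_of_eigen (hU i) hμ (heig · i), map_smul, smul_mulVec,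
    dotProduct_smul, smul_eq_mul, dotProduct_mul_mul_mulVec_of_eigen (hU i) hμ (heig · i)]
    at hconj
  exact (eq_iff_eq_of_neg_one_pow_mul_eq (mul_right_cancel₀ h hconj)).symm

lemma pinch_map_vecMulVec (horth : ∀ a b, star (v a) ⬝ᵥ v b = if a = b then 1 else 0)
    (hcompl : ∑ a, vecMulVec (v a) (star (v a)) = 1)
    {U : Fin n → Matrix (Fin n → Fin 2) (Fin n → Fin 2) ℂ} (hU : ∀ i, (U i).IsHermitian)
    (heig : ∀ a i, U i *ᵥ v a = ((-1 : ℂ) ^ (a i : ℕ)) • v a)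
    {T : Matrix (Fin n → Fin 2) (Fin n → Fin 2) ℂ →ₗ[ℂ] Matrix (Fin n → Fin 2) (Fin n → Fin 2) ℂ}
    (hT : ∀ i X, T (U i * X * U i) = U i * T X * U i) (c d : Fin n → Fin 2) :
    pinch v (T (vecMulVec (v c) (star (v d)))) = T (pinch v (vecMulVec (v c) (star (v d)))) := by
  refine ext_of_dotProduct_mulVec hcompl fun a b => ?_
  rw [dotProduct_pinch_mulVec horth, pinch_vecMulVec horth]
  by_cases hab : a = b <;> by_cases hcd : c = d
  · subst hab hcd
    simp
  · subst hab
    rw [if_pos rfl, if_neg hcd, map_zero, zero_mulVec, dotProduct_zero]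
    by_contra h
    exact hcd (funext fun i =>
      (eq_iff_eq_of_dotProduct_map_vecMulVec_mulVec_ne_zero hU heig hT h i).mp rfl)
  · subst hcd
    rw [if_neg hab, if_pos rfl, eq_comm]
    by_contra h
    exact hab (funext fun i =>
      (eq_iff_eq_of_dotProduct_map_vecMulVec_mulVec_ne_zero hU heig hT h i).mpr rfl)
  · rw [if_neg hab, if_neg hcd, map_zero, zero_mulVec, dotProduct_zero]

theorem pinch_map_eq_map_pinch (horth : ∀ a b, star (v a) ⬝ᵥ v b = if a = b then 1 else 0)
    (hcompl : ∑ a, vecMulVec (v a) (star (v a)) = 1)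
    {U : Fin n → Matrix (Fin n → Fin 2) (Fin n → Fin 2) ℂ} (hU : ∀ i, (U i).IsHermitian)
    (heig : ∀ a i, U i *ᵥ v a = ((-1 : ℂ) ^ (a i : ℕ)) • v a)
    (T : Matrix (Fin n → Fin 2) (Fin n → Fin 2) ℂ →ₗ[ℂ] Matrix (Fin n → Fin 2) (Fin n → Fin 2) ℂ)
    (hT : ∀ i X, T (U i * X * U i) = U i * T X * U i)
    (X : Matrix (Fin n → Fin 2) (Fin n → Fin 2) ℂ) :
    pinch v (T X) = T (pinch v X) := by
  change pinchLinearMap v (T X) = T (pinchLinearMap v X)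
  rw [eq_sum_smul_vecMulVec hcompl X]
  simp only [map_sum, map_smul, pinchLinearMap_apply,
    pinch_map_vecMulVec horth hcompl hU heig hT]

end Pinching

section PartialTranspose

variable {n : ℕ}

def ptSwap {ι β : Type*} [DecidableEq ι] (M : Finset ι) (p : (ι → β) × (ι → β)) :
    (ι → β) × (ι → β) :=
  (fun i => if i ∈ M then p.2 i else p.1 i, fun i => if i ∈ M then p.1 i else p.2 i)

lemma ptSwap_involutive {ι β : Type*} [DecidableEq ι] (M : Finset ι) :
    Function.Involutive (ptSwap (β := β) M) := by
  rintro ⟨x, y⟩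
  ext i <;> by_cases hi : i ∈ M <;> simp [ptSwap, hi]

lemma ptQ_apply (M : Finset (Fin n)) (ρ : Matrix (Fin n → Fin 2) (Fin n → Fin 2) ℂ)
    (x y : Fin n → Fin 2) : ptQ M ρ x y = ρ (ptSwap M (x, y)).1 (ptSwap M (x, y)).2 := rfl

def ptQLinearMap (M : Finset (Fin n)) :
    Matrix (Fin n → Fin 2) (Fin n → Fin 2) ℂ →ₗ[ℂ] Matrix (Fin n → Fin 2) (Fin n → Fin 2) ℂ where
  toFun := ptQ M
  map_add' _ _ := rfl
  map_smul' _ _ := rfl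

lemma ptQ_localOp_mul_mul {A : Fin n → Matrix (Fin 2) (Fin 2) ℂ} (hA : ∀ j, (A j).IsSymm)
    (M : Finset (Fin n)) (O : Matrix (Fin n → Fin 2) (Fin n → Fin 2) ℂ) :
    ptQ M (localOp A * O * localOp A) = localOp A * ptQ M O * localOp A := by
  ext x y
  -- reindexing the sum by `ptSwap` moves the partial transpose from `O` onto the outer factors,
  -- where it is absorbed by the symmetry of each `A j`
  have hlocal : ∀ u w, localOp A (ptSwap M (x, y)).1 u * localOp A w (ptSwap M (x, y)).2
      = localOp A x (ptSwap M (u, w)).1 * localOp A (ptSwap M (u, w)).2 y := by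
    intro u w
    simp only [localOp, of_apply, ← Finset.prod_mul_distrib, ptSwap]
    refine Finset.prod_congr rfl fun j _ => ?_
    split_ifs
    · rw [(hA j).apply, (hA j).apply (w j), mul_comm]
    · rfl
  rw [ptQ_apply, mul_mul_apply_eq_sum, mul_mul_apply_eq_sum]
  refine Fintype.sum_equiv (ptSwap_involutive M).toPerm _ _ fun p => ?_
  simp only [Function.Involutive.coe_toPerm, ptQ_apply, Prod.mk.eta, ptSwap_involutive M p]
  rw [mul_right_comm, hlocal, mul_right_comm]

end PartialTranspose

section GraphStabilizer

variable {n : ℕ}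

lemma PX_isSymm : PX.IsSymm := by
  ext i j; fin_cases i <;> fin_cases j <;> rfl

lemma PZ_isSymm : PZ.IsSymm := by
  ext i j; fin_cases i <;> fin_cases j <;> rfl

lemma PX_isHermitian : PX.IsHermitian := by
  ext i j; fin_cases i <;> fin_cases j <;> simp [PX]

lemma PZ_isHermitian : PZ.IsHermitian := by
  ext i j; fin_cases i <;> fin_cases j <;> simp [PZ]

lemma localOp_isHermitian {A : Fin n → Matrix (Fin 2) (Fin 2) ℂ} (hA : ∀ j, (A j).IsHermitian) :
    (localOp A).IsHermitian := by
  ext x y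
  simp only [conjTranspose_apply, localOp, of_apply, star_prod]
  exact Finset.prod_congr rfl fun j _ => (hA j).apply (x j) (y j)

lemma gen_isHermitian (G : SimpleGraph (Fin n)) [DecidableRel G.Adj] (i : Fin n) :
    (gen G i).IsHermitian :=
  localOp_isHermitian fun j => by
    split_ifs
    exacts [PX_isHermitian, PZ_isHermitian, isHermitian_one]

lemma ptQ_gen_mul_mul (G : SimpleGraph (Fin n)) [DecidableRel G.Adj] (M : Finset (Fin n))
    (i : Fin n) (O : Matrix (Fin n → Fin 2) (Fin n → Fin 2) ℂ) :
    ptQ M (gen G i * O * gen G i) = gen G i * ptQ M O * gen G i :=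
  ptQ_localOp_mul_mul (fun j => by split_ifs; exacts [PX_isSymm, PZ_isSymm, isSymm_one]) M O

end GraphStabilizer

lemma Matrix.PosSemidef.pinch {n : ℕ} (v : (Fin n → Fin 2) → (Fin n → Fin 2) → ℂ)
    {A : Matrix (Fin n → Fin 2) (Fin n → Fin 2) ℂ} (hA : A.PosSemidef) :
    (pinch v A).PosSemidef :=
  posSemidef_sum _ fun a _ =>
    (posSemidef_vecMulVec_self_star (v a)).smul (hA.dotProduct_mulVec_nonneg (v a))

lemma trace_pinch_mul_sum_smul_vecMulVec {n : ℕ} {v : (Fin n → Fin 2) → (Fin n → Fin 2) → ℂ}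
    (horth : ∀ a b, star (v a) ⬝ᵥ v b = if a = b then 1 else 0) (s : (Fin n → Fin 2) → ℂ)
    (W : Matrix (Fin n → Fin 2) (Fin n → Fin 2) ℂ) :
    (pinch v W * ∑ a, s a • vecMulVec (v a) (star (v a))).trace
      = (W * ∑ a, s a • vecMulVec (v a) (star (v a))).trace := by
  simp only [Matrix.mul_sum, Matrix.mul_smul, trace_sum, trace_smul, mul_vecMulVec,
    trace_vecMulVec, dotProduct_comm _ (star _), dotProduct_pinch_mulVec horth, if_true]

/-- For graph-diagonal states, decompositions `W = P + Q^{T_M}` may be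
graph-diagonalized: the pinched operators satisfy `Tr(W̄ρ_G) = Tr(Wρ_G)`,
`W̄ = P̄ + Q̄^{T_M}`, `P̄ ≥ 0` and `Q̄ ≥ 0`. -/
theorem stmt17 {n : ℕ} (G : SimpleGraph (Fin n)) [DecidableRel G.Adj]
    (v : (Fin n → Fin 2) → (Fin n → Fin 2) → ℂ)
    (horth : ∀ a b, star (v a) ⬝ᵥ v b = if a = b then 1 else 0)
    (hcompl : (∑ a, Matrix.of (fun x y => v a x * star (v a y))) = 1)
    (heig : ∀ a i, gen G i *ᵥ v a = ((-1 : ℂ) ^ (a i : ℕ)) • v a)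
    (M : Finset (Fin n))
    (ρG : Matrix (Fin n → Fin 2) (Fin n → Fin 2) ℂ)
    (s : (Fin n → Fin 2) → ℂ)
    (hρ : ρG = ∑ a, s a • Matrix.of (fun x y => v a x * star (v a y)))
    (W P Q : Matrix (Fin n → Fin 2) (Fin n → Fin 2) ℂ)
    (hP : P.PosSemidef) (hQ : Q.PosSemidef) (hW : W = P + ptQ M Q) :
    (pinch v W * ρG).trace = (W * ρG).trace ∧
    pinch v W = pinch v P + ptQ M (pinch v Q) ∧
    (pinch v P).PosSemidef ∧ (pinch v Q).PosSemidef := by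
  have hcomm : pinch v (ptQ M Q) = ptQ M (pinch v Q) :=
    pinch_map_eq_map_pinch horth hcompl (gen_isHermitian G) heig (ptQLinearMap M)
      (ptQ_gen_mul_mul G M) Q
  refine ⟨?_, ?_, hP.pinch v, hQ.pinch v⟩
  · rw [hρ]
    exact trace_pinch_mul_sum_smul_vecMulVec horth s W
  · rw [hW, pinch_add, hcomm]
end

section
/- For an n-qubit graph state |Gₙ⟩ and a subset B(n) of b qubits (pairwise non-adjacent with pairwise disjoint neighborhoods), the witness W = (1/2)𝟙 - |Gₙ⟩⟨Gₙ| - (1/2)Σ_{s} ∏_{i∈B} (𝟙 + s_i g_i)/2 (sum over sign vectors s ∈ {±1}^b with at least two entries equal to -1) has trace Tr(W) = 2^{n-1} - 1 - 2^{n-b-1}(2^b - b - 1), and hence white noise tolerance p(n) = (1 - 2^{-n+1} + 2^{-b}(b+1))^{-1} given ⟨Gₙ|W|Gₙ⟩ = -1/2. -/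
/-!
Expanding `∏_{i∈B} (𝟙 + s_i g_i)/2` gives `2^{-b} 𝟙` plus multiples of products of generators
over nonempty `S ⊆ B`. Such a product flips exactly the qubits of `S` (the `X` factors), so it
has zero diagonal and is traceless. Hence every projector has trace `2^{n-b}`, there are
`2^b - b - 1` of them, and both formulas reduce to arithmetic.
-/

open Matrix

/-- The projector `∏_{i∈B} (𝟙 + s_i g_i)/2`, where the sign vector `s` takes the value
`-1` exactly on the subset `T ⊆ B`. -/
noncomputable def projSigns {n : ℕ} (G : SimpleGraph (Fin n)) [DecidableRel G.Adj]
    (B T : Finset (Fin n)) : Matrix (Fin n → Fin 2) (Fin n → Fin 2) ℂ :=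
  ((List.finRange n).map (fun i =>
    if i ∈ B then (2⁻¹ : ℂ) • (1 + (if i ∈ T then (-1 : ℂ) else 1) • gen G i) else 1)).prod

open Finset

section Flips

variable {ι α R : Type*} [CommRing R]

/-- On qubits, this contains every Pauli string whose `X`-part is a nonempty subset of `L`. -/
def flipsWithin (L : Finset ι) : Submodule R (Matrix (ι → α) (ι → α) R) where
  carrier := {M | ∀ x y, M x y ≠ 0 → x ≠ y ∧ ∀ j ∉ L, x j = y j}
  zero_mem' := by simp
  add_mem' {M N} hM hN x y h := by
    by_cases hMxy : M x y = 0
    · exact hN x y (by simpa [hMxy] using h)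
    · exact hM x y hMxy
  smul_mem' c M hM x y h := hM x y (right_ne_zero_of_mul h)

def FlipsExactlyAt (i : ι) (M : Matrix (ι → α) (ι → α) R) : Prop :=
  ∀ x y, M x y ≠ 0 → ∀ j, x j = y j ↔ j ≠ i

variable {L L' : Finset ι} {M N : Matrix (ι → α) (ι → α) R} {i : ι}

theorem flipsWithin_mono (h : L ⊆ L') : flipsWithin (R := R) (α := α) L ≤ flipsWithin L' :=
  fun _ hM x y hxy => ⟨(hM x y hxy).1, fun j hj => (hM x y hxy).2 j fun hjL => hj (h hjL)⟩

theorem trace_eq_zero_of_mem_flipsWithin [Fintype ι] [DecidableEq ι] [Fintype α]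
    (hM : M ∈ flipsWithin L) : M.trace = 0 :=
  sum_eq_zero fun x _ => by_contra fun h => (hM x x h).1 rfl

theorem FlipsExactlyAt.mem_flipsWithin_insert [DecidableEq ι] (hM : FlipsExactlyAt i M) :
    M ∈ flipsWithin (insert i L) := fun x y hxy =>
  ⟨fun h => (hM x y hxy i).1 (congrFun h i) rfl,
    fun j hj => (hM x y hxy j).2 fun hji => hj (hji ▸ mem_insert_self j L)⟩

theorem FlipsExactlyAt.mul_mem_flipsWithin_insert [Fintype ι] [DecidableEq ι] [Fintype α]
    (hM : FlipsExactlyAt i M) (hi : i ∉ L) (hN : N ∈ flipsWithin L) :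
    M * N ∈ flipsWithin (insert i L) := by
  intro x y hxy
  obtain ⟨z, -, hz⟩ := exists_ne_zero_of_sum_ne_zero hxy
  have hxz := hM x z (left_ne_zero_of_mul hz)
  have hzy := (hN z y (right_ne_zero_of_mul hz)).2
  refine ⟨fun h => (hxz i).1 ?_ rfl, fun j hj => ?_⟩
  · rw [h, hzy i hi]
  · rw [mem_insert, not_or] at hj
    rw [(hxz j).2 hj.1, hzy j hj.2]

theorem list_prod_sub_smul_one_mem_flipsWithin [Fintype ι] [DecidableEq ι] [Fintype α]
    [DecidableEq α] (a b : ι → R) (M : ι → Matrix (ι → α) (ι → α) R)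
    (hM : ∀ i, FlipsExactlyAt i (M i)) {l : List ι} (hl : l.Nodup) :
    (l.map fun i => a i • 1 + b i • M i).prod - (l.map a).prod • 1 ∈ flipsWithin l.toFinset := by
  induction l with
  | nil => simp
  | cons i l ih =>
    rw [List.nodup_cons] at hl
    set P := (l.map fun i => a i • 1 + b i • M i).prod
    set c := (l.map a).prod
    have hiL : i ∉ l.toFinset := List.mem_toFinset.not.2 hl.1
    have hP : P - c • 1 ∈ flipsWithin (insert i l.toFinset) :=
      flipsWithin_mono (subset_insert i _) (ih hl.2)
    have key : (a i • 1 + b i • M i) * P - (a i * c) • 1 =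
        a i • (P - c • 1) + (b i * c) • M i + b i • (M i * (P - c • 1)) := by
      simp only [add_mul, smul_mul_assoc, one_mul, mul_sub, mul_smul_comm, mul_one]
      module
    simp only [List.map_cons, List.prod_cons, List.toFinset_cons]
    rw [key]
    exact add_mem (add_mem (Submodule.smul_mem _ _ hP)
      (Submodule.smul_mem _ _ (hM i).mem_flipsWithin_insert))
      (Submodule.smul_mem _ _ ((hM i).mul_mem_flipsWithin_insert hiL (ih hl.2)))

theorem trace_list_prod_smul_one_add_smul [Fintype ι] [DecidableEq ι] [Fintype α]
    [DecidableEq α] (a b : ι → R) (M : ι → Matrix (ι → α) (ι → α) R)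
    (hM : ∀ i, FlipsExactlyAt i (M i)) {l : List ι} (hl : l.Nodup) :
    (l.map fun i => a i • 1 + b i • M i).prod.trace =
      (l.map a).prod * Fintype.card (ι → α) := by
  have h := trace_eq_zero_of_mem_flipsWithin (list_prod_sub_smul_one_mem_flipsWithin a b M hM hl)
  rwa [trace_sub, trace_smul, trace_one, sub_eq_zero, smul_eq_mul] at h

end Flips

theorem localOp_apply_ne_zero {n : ℕ} {A : Fin n → Matrix (Fin 2) (Fin 2) ℂ} {x y : Fin n → Fin 2}
    (h : localOp A x y ≠ 0) (j : Fin n) : A j (x j) (y j) ≠ 0 :=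
  prod_ne_zero_iff.1 (show ∏ j, A j (x j) (y j) ≠ 0 from h) j (mem_univ j)

theorem gen_flipsExactlyAt {n : ℕ} (G : SimpleGraph (Fin n)) [DecidableRel G.Adj] (i : Fin n) :
    FlipsExactlyAt i (gen G i) := by
  intro x y hxy j
  have h := localOp_apply_ne_zero hxy j
  generalize x j = a, y j = b at h
  split_ifs at h <;> fin_cases a <;> fin_cases b <;> simp_all [PX, PZ]

theorem projSigns_eq_list_prod {n : ℕ} (G : SimpleGraph (Fin n)) [DecidableRel G.Adj]
    (B T : Finset (Fin n)) :
    projSigns G B T = ((List.finRange n).map fun i =>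
      (if i ∈ B then (2⁻¹ : ℂ) else 1) • 1 +
        (if i ∈ B then 2⁻¹ * if i ∈ T then (-1 : ℂ) else 1 else 0) • gen G i).prod := by
  refine congrArg List.prod (List.map_congr_left fun i _ => ?_)
  split_ifs <;> simp [smul_add]

theorem trace_projSigns {n : ℕ} (G : SimpleGraph (Fin n)) [DecidableRel G.Adj]
    (B T : Finset (Fin n)) : (projSigns G B T).trace = (2⁻¹ : ℂ) ^ B.card * 2 ^ n := by
  rw [projSigns_eq_list_prod, trace_list_prod_smul_one_add_smul _ _ _ (gen_flipsExactlyAt G)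
    (List.nodup_finRange n), ← Fin.prod_univ_def, prod_ite_mem, univ_inter, prod_const]
  simp

theorem card_powerset_filter_two_le_add {β : Type*} [DecidableEq β] (s : Finset β) :
    #(s.powerset.filter fun T => 2 ≤ T.card) + s.card + 1 = 2 ^ s.card := by
  have hsmall : s.powerset.filter (fun T => ¬ 2 ≤ T.card) =
      s.powersetCard 1 ∪ s.powersetCard 0 := by
    ext T
    simp only [mem_filter, mem_powerset, mem_union, mem_powersetCard, ← and_or_left]
    exact and_congr_right fun _ => by omega
  rw [← card_powerset, ← card_filter_add_card_filter_not (s := s.powerset) (2 ≤ ·.card), hsmall,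
    card_union_of_disjoint, card_powersetCard, card_powersetCard]
  · simp [add_assoc]
  · exact disjoint_left.2 fun T h1 h0 => by simp_all [mem_powersetCard]

section Arithmetic

variable {K : Type*} [Field K] [CharZero K] {n b : ℕ}

theorem half_sub_one_sub_half_mul_eq (h : b + 1 ≤ n) :
    2⁻¹ * 2 ^ n - 1 - 2⁻¹ * ((2 ^ b - b - 1) * ((2⁻¹ : K) ^ b * 2 ^ n)) =
      2 ^ (n - 1) - 1 - 2 ^ (n - b - 1) * (2 ^ b - b - 1) := by
  obtain ⟨m, rfl⟩ : ∃ m, n = m + b + 1 := ⟨n - b - 1, by omega⟩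
  rw [show m + b + 1 - 1 = m + b by omega, show m + b + 1 - b - 1 = m by omega]
  simp only [pow_add, inv_pow]
  field_simp

theorem one_sub_div_neg_half_eq (h : b + 1 ≤ n) :
    1 - (2 ^ (n - 1) - 1 - 2 ^ (n - b - 1) * (2 ^ b - b - 1)) / (2 ^ n * (-(1 / 2)) : K) =
      1 - (2 ^ (n - 1))⁻¹ + (2 ^ b)⁻¹ * (b + 1) := by
  obtain ⟨m, rfl⟩ : ∃ m, n = m + b + 1 := ⟨n - b - 1, by omega⟩
  rw [show m + b + 1 - 1 = m + b by omega, show m + b + 1 - b - 1 = m by omega]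
  simp only [pow_add]
  field_simp
  ring

end Arithmetic

theorem stmt18_general {n : ℕ} (G : SimpleGraph (Fin n)) [DecidableRel G.Adj]
    (B : Finset (Fin n)) (hcard : B.card + 1 ≤ n)
    (v : (Fin n → Fin 2) → ℂ) (hnorm : star v ⬝ᵥ v = 1)
    (W : Matrix (Fin n → Fin 2) (Fin n → Fin 2) ℂ)
    (hW : W = (2⁻¹ : ℂ) • 1 - Matrix.of (fun x y => v x * star (v y))
      - (2⁻¹ : ℂ) • ∑ T ∈ B.powerset.filter (fun T => 2 ≤ T.card), projSigns G B T) :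
    W.trace = (2 : ℂ) ^ (n - 1) - 1
        - (2 : ℂ) ^ (n - B.card - 1) * ((2 : ℂ) ^ B.card - B.card - 1) ∧
    (star v ⬝ᵥ W *ᵥ v = -(1/2) →
      (1 - W.trace.re / ((2 : ℝ) ^ n * (-(1/2))))⁻¹ =
      (1 - ((2 : ℝ) ^ (n - 1))⁻¹ + ((2 : ℝ) ^ B.card)⁻¹ * (B.card + 1))⁻¹) := by
  have hpure : (Matrix.of fun x y => v x * star (v y)).trace = 1 := by
    rw [← hnorm, dotProduct_comm]
    exact trace_vecMulVec v (star v)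
  have hcount : (#(B.powerset.filter fun T => 2 ≤ T.card) : ℂ) = 2 ^ B.card - B.card - 1 := by
    rw [sub_sub, eq_sub_iff_add_eq, ← add_assoc]
    exact_mod_cast card_powerset_filter_two_le_add B
  have htrace : W.trace = (2 : ℂ) ^ (n - 1) - 1
      - (2 : ℂ) ^ (n - B.card - 1) * ((2 : ℂ) ^ B.card - B.card - 1) := by
    rw [hW, trace_sub, trace_sub, trace_smul, trace_smul, trace_one, hpure, trace_sum,
      sum_congr rfl fun T _ => trace_projSigns G B T, sum_const, nsmul_eq_mul, hcount]
    simpa using half_sub_one_sub_half_mul_eq hcard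
  refine ⟨htrace, fun _ => ?_⟩
  have hre : W.trace.re = 2 ^ (n - 1) - 1 - 2 ^ (n - B.card - 1) * (2 ^ B.card - B.card - 1) := by
    rw [htrace]
    norm_cast
  rw [hre, one_sub_div_neg_half_eq hcard]

/-- Trace and white-noise tolerance of the witness
`W = 𝟙/2 - |G⟩⟨G| - (1/2) Σ_s ∏_{i∈B} (𝟙 + s_i g_i)/2`, where the sum runs over sign
vectors with at least two `-1` entries: `Tr W = 2^{n-1} - 1 - 2^{n-b-1}(2^b - b - 1)`,
and given `⟨G|W|G⟩ = -1/2` the tolerance is `(1 - 2^{-n+1} + 2^{-b}(b+1))^{-1}`. -/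
theorem stmt18 {n : ℕ} (hn : 1 ≤ n) (G : SimpleGraph (Fin n)) [DecidableRel G.Adj]
    (B : Finset (Fin n)) (hcard : B.card + 1 ≤ n)
    (hind : ∀ i ∈ B, ∀ j ∈ B, i ≠ j →
      ¬ G.Adj i j ∧ ∀ k, ¬ (G.Adj i k ∧ G.Adj j k))
    (v : (Fin n → Fin 2) → ℂ) (hnorm : star v ⬝ᵥ v = 1)
    (heig : ∀ i, gen G i *ᵥ v = v)
    (W : Matrix (Fin n → Fin 2) (Fin n → Fin 2) ℂ)
    (hW : W = (2⁻¹ : ℂ) • 1 - Matrix.of (fun x y => v x * star (v y))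
      - (2⁻¹ : ℂ) • ∑ T ∈ B.powerset.filter (fun T => 2 ≤ T.card), projSigns G B T) :
    W.trace = (2 : ℂ) ^ (n - 1) - 1
        - (2 : ℂ) ^ (n - B.card - 1) * ((2 : ℂ) ^ B.card - B.card - 1) ∧
    (star v ⬝ᵥ W *ᵥ v = -(1/2) →
      (1 - W.trace.re / ((2 : ℝ) ^ n * (-(1/2))))⁻¹ =
      (1 - ((2 : ℝ) ^ (n - 1))⁻¹ + ((2 : ℝ) ^ B.card)⁻¹ * (B.card + 1))⁻¹) :=
  stmt18_general G B hcard v hnorm W hW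
end
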